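/- Let Γ be a countable subgroup of PSL(2,ℝ) acting on the upper half-plane ℍ, let M ∈ PSL(2,ℝ), and set G = Γ ∩ M⁻¹ΓM. Then there exists a countable subset E of ℍ such that for every τ₀ ∈ ℍ ∖ E the following holds: for all γ₁, γ₂ ∈ Γ, if M(γ₁τ₀) and M(γ₂τ₀) lie in the same Γ-orbit, then Gγ₁ = Gγ₂. Consequently, for τ₀ ∉ E the map from right cosets G\Γ to Γ-orbits in ℍ sending Gγ to the Γ-orbit of M(γτ₀) is injective. -/

import Mathlib

/-!
If `M γ₁ τ₀ = δ M γ₂ τ₀` with `δ ∈ Γ`, then `τ₀` is fixed by `γ₁⁻¹ (M⁻¹ δ M) γ₂`, an element of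
the countable set `Γ · M⁻¹ΓM · Γ`. A non-identity Möbius transformation fixes at most one point of
`ℍ` (a non-scalar matrix of positive determinant with a fixed point is elliptic, and an elliptic
one has a unique fixed point), so away from the countable set of fixed points of the non-identity
elements of that set the element is `1`, i.e. `γ₁ γ₂⁻¹ = M⁻¹ δ M ∈ Γ ∩ M⁻¹ΓM`.
-/

open scoped MatrixGroups
open UpperHalfPlane Matrix

/-- Every element of the center of `SL(2, ℝ)` acts trivially on the upper half-plane. -/
theorem center_smul_trivial (A : Matrix.SpecialLinearGroup (Fin 2) ℝ)
    (hA : A ∈ Subgroup.center (Matrix.SpecialLinearGroup (Fin 2) ℝ)) (z : ℍ) : A • z = z := by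
  obtain ⟨r, hr, hrA⟩ := Matrix.SpecialLinearGroup.mem_center_iff.mp hA
  have hr0 : (r : ℂ) ≠ 0 := by
    intro h
    rw [show r = (0:ℝ) from by exact_mod_cast h] at hr
    norm_num at hr
  have h00 : (A : Matrix (Fin 2) (Fin 2) ℝ) 0 0 = r := by rw [← hrA]; simp
  have h01 : (A : Matrix (Fin 2) (Fin 2) ℝ) 0 1 = 0 := by rw [← hrA]; simp
  have h10 : (A : Matrix (Fin 2) (Fin 2) ℝ) 1 0 = 0 := by rw [← hrA]; simp
  have h11 : (A : Matrix (Fin 2) (Fin 2) ℝ) 1 1 = r := by rw [← hrA]; simp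
  ext
  rw [UpperHalfPlane.specialLinearGroup_apply]
  simp only [UpperHalfPlane.coe_mk, h00, h01, h10, h11, map_zero, Complex.ofReal_zero,
    zero_mul, add_zero, zero_add, Algebra.algebraMap_self, RingHom.id_apply]
  field_simp

/-- The action of `PSL(2, ℝ) = SL(2, ℝ)/{±I}` on the upper half-plane by Möbius
transformations, descended from the action of `SL(2, ℝ)`. -/
noncomputable instance PSL.mulActionUpperHalfPlane : MulAction PSL(2, ℝ) ℍ :=
  MulAction.compHom ℍ <|
    QuotientGroup.lift (Subgroup.center _)
      (MulAction.toPermHom (Matrix.SpecialLinearGroup (Fin 2) ℝ) ℍ)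
      (fun A hA => Equiv.ext fun z => center_smul_trivial A hA z)

open MulAction Pointwise

theorem exists_countable_forall_mul_inv_mem_of_smul_mem_orbit {H X : Type*} [Group H]
    [MulAction H X] (hfix : ∀ g : H, g ≠ 1 → (fixedBy X g).Subsingleton)
    (Γ : Subgroup H) (hΓ : (Γ : Set H).Countable) (M : H) :
    ∃ E : Set X, E.Countable ∧ ∀ x : X, x ∉ E →
      ∀ γ₁ γ₂ : H, γ₁ ∈ Γ → γ₂ ∈ Γ →
        M • (γ₁ • x) ∈ orbit Γ (M • (γ₂ • x)) →
          γ₁ * γ₂⁻¹ ∈ Γ ⊓ Subgroup.map (MulAut.conj M⁻¹).toMonoidHom Γ := by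
  set Γ' := Subgroup.map (MulAut.conj M⁻¹).toMonoidHom Γ
  set S : Set H := (Γ : Set H) * Γ' * Γ
  have hS : S.Countable := (hΓ.image2 (hΓ.image _) _).image2 hΓ _
  refine ⟨⋃ g ∈ S \ {1}, fixedBy X g,
    (hS.mono Set.sdiff_subset).biUnion fun g hg ↦ (hfix g hg.2).countable, ?_⟩
  rintro x hx γ₁ γ₂ h₁ h₂ ⟨δ, hδ⟩
  have hδΓ' : M⁻¹ * δ * M ∈ Γ' := ⟨δ, δ.2, by simp⟩
  set g := γ₁⁻¹ * (M⁻¹ * δ * M) * γ₂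
  have hgS : g ∈ S := Set.mul_mem_mul (Set.mul_mem_mul (inv_mem h₁) hδΓ') h₂
  have hgx : g • x = x := by
    change (δ : H) • M • γ₂ • x = M • γ₁ • x at hδ
    simp only [g, mul_smul, hδ, inv_smul_smul]
  have hg : g = 1 := by_contra fun hg ↦ hx (Set.mem_biUnion ⟨hgS, hg⟩ hgx)
  have hconj : γ₁ * γ₂⁻¹ = M⁻¹ * δ * M :=
    calc γ₁ * γ₂⁻¹ = γ₁ * g * γ₂⁻¹ := by rw [hg, mul_one]
      _ = M⁻¹ * δ * M := by simp only [g]; group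
  exact Subgroup.mem_inf.mpr ⟨Γ.mul_mem h₁ (Γ.inv_mem h₂), hconj ▸ hδΓ'⟩

namespace UpperHalfPlane

theorem subsingleton_fixedBy_of_notMem_center {g : GL (Fin 2) ℝ} (hdet : 0 < g.val.det)
    (hg : g ∉ Subgroup.center _) : (fixedBy ℍ g).Subsingleton := by
  intro z hz w hw
  have hell := isElliptic_of_exists_smul_eq_self hdet hg ⟨z, hz⟩
  rw [mem_fixedBy, gl_smul_eq_self_iff_eq_fixedPt hdet hell] at hz hw
  exact hz.trans hw.symm

theorem subsingleton_fixedBy_SL_of_notMem_center {A : SL(2, ℝ)}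
    (hA : A ∉ Subgroup.center _) : (fixedBy ℍ A).Subsingleton := by
  have hAGL : Matrix.SpecialLinearGroup.mapGL ℝ A ∉ Subgroup.center _ := by
    refine fun h ↦ hA (Subgroup.mem_center_iff.mpr fun B ↦ ?_)
    apply Matrix.SpecialLinearGroup.mapGL_injective (S := ℝ)
    simpa only [map_mul] using Subgroup.mem_center_iff.mp h _
  exact subsingleton_fixedBy_of_notMem_center (by simp) hAGL

theorem subsingleton_fixedBy_PSL_of_ne_one {g : PSL(2, ℝ)} (hg : g ≠ 1) :
    (fixedBy ℍ g).Subsingleton := by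
  obtain ⟨A, rfl⟩ := QuotientGroup.mk_surjective g
  exact subsingleton_fixedBy_SL_of_notMem_center (mt (QuotientGroup.eq_one_iff A).mpr hg)

end UpperHalfPlane

theorem coset_map_injective_off_countable_set
    (Γ : Subgroup PSL(2, ℝ)) (hΓ : (Γ : Set PSL(2, ℝ)).Countable)
    (M : PSL(2, ℝ))
    (G : Subgroup PSL(2, ℝ)) (hG : G = Γ ⊓ Subgroup.map (MulAut.conj M⁻¹).toMonoidHom Γ) :
    ∃ E : Set ℍ, E.Countable ∧ ∀ τ₀ : ℍ, τ₀ ∉ E →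
      ∀ γ₁ γ₂ : PSL(2, ℝ), γ₁ ∈ Γ → γ₂ ∈ Γ →
        M • (γ₁ • τ₀) ∈ MulAction.orbit Γ (M • (γ₂ • τ₀)) → γ₁ * γ₂⁻¹ ∈ G :=
  hG ▸ exists_countable_forall_mul_inv_mem_of_smul_mem_orbit
    (fun _ ↦ UpperHalfPlane.subsingleton_fixedBy_PSL_of_ne_one) Γ hΓ M
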